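/- arXiv:0711.1143 — 2 statements merged into one kernel-verified Lean document; each statement's English description precedes it below -/
import Mathlib

section
/- Second welfare theorem analogue: for W ∈ L^∞ and (X_t)_{t∈𝕋} ∈ A(W), the allocation (X_t) is Pareto optimal if and only if there exists λ ∈ (0,∞)^T such that (X_t) solves Problem P_λ, i.e. maximizes ∑_{t∈𝕋} λ_t E[u_t(Ỹ_t)] over (Y_t) ∈ A(W). -/
/-
Pareto optimality of `X` says that its vector of expected utilities is not strictly dominated by
any point of the utility possibility set, the set of utility vectors dominated by those of some
allocation. Concavity of the `u_t` makes that set convex, so Hahn–Banach separates it from the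
open orthant above `X`'s utility vector, which yields nonnegative weights, not all zero, for
which `X` solves `P_λ`. No weight can vanish: moving one unit of discounted wealth from a date
with zero weight to a date with positive weight keeps the allocation admissible and strictly
raises the weighted sum. The converse is immediate because all weights are positive.
-/

open MeasureTheory Finset Real

noncomputable section

/-- `A(W)`: the set of admissible intertemporal allocations of the risk `W`:
adapted processes `(Y_t)_{t∈𝕋}` with each `Y_t` essentially bounded and
`∑_{t∈𝕋} Y_t/B_t = W` a.s. -/
def IsAlloc {Ω : Type*} [mΩ : MeasurableSpace Ω] (μ : Measure Ω) (T : ℕ)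
    (ℱ : ℕ → MeasurableSpace Ω) (B : ℕ → Ω → ℝ) (W : Ω → ℝ) (Y : ℕ → Ω → ℝ) : Prop :=
  (∀ t ∈ Finset.Icc 1 T, Measurable[ℱ t] (Y t) ∧ ∃ C : ℝ, ∀ᵐ ω ∂μ, |Y t ω| ≤ C) ∧
  ∀ᵐ ω ∂μ, ∑ t ∈ Finset.Icc 1 T, Y t ω / B t ω = W ω

/-- The integrated expected utility `∑_{t∈𝕋} E[u_t(Ỹ_t)]` of an allocation. -/
def allocVal {Ω : Type*} [mΩ : MeasurableSpace Ω] (μ : Measure Ω) (T : ℕ)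
    (u : ℕ → ℝ → ℝ) (B : ℕ → Ω → ℝ) (Y : ℕ → Ω → ℝ) : ℝ :=
  ∑ t ∈ Finset.Icc 1 T, ∫ ω, u t (Y t ω / B t ω) ∂μ

/-- The utility functional `U(W) = sup { ∑_t E[u_t(Ỹ_t)] : Y ∈ A(W) }`. -/
def Util {Ω : Type*} [mΩ : MeasurableSpace Ω] (μ : Measure Ω) (T : ℕ)
    (ℱ : ℕ → MeasurableSpace Ω) (u : ℕ → ℝ → ℝ) (B : ℕ → Ω → ℝ) (W : Ω → ℝ) : ℝ :=
  sSup {s : ℝ | ∃ Y, IsAlloc μ T ℱ B W Y ∧ s = allocVal μ T u B Y}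

theorem exists_nonneg_weights_of_not_strictly_dominated {ι : Type*} [Fintype ι]
    {V : Set (ι → ℝ)} (hV : Convex ℝ V) {x : ι → ℝ} (hx : x ∈ V)
    (hmax : ∀ v ∈ V, ∃ i, v i ≤ x i) :
    ∃ lam : ι → ℝ, (∀ i, 0 ≤ lam i) ∧ (∃ i, 0 < lam i) ∧
      ∀ v ∈ V, ∑ i, lam i * v i ≤ ∑ i, lam i * x i := by
  classical
  set O : Set (ι → ℝ) := Set.univ.pi fun i => Set.Ioi (x i)
  have hdisj : Disjoint O V := Set.disjoint_left.2 fun v hvO hvV => by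
    obtain ⟨i, hi⟩ := hmax v hvV
    exact hi.not_gt (hvO i (Set.mem_univ i))
  obtain ⟨f, c, hfO, hfV⟩ := geometric_hahn_banach_open (convex_pi fun i _ => convex_Ioi (x i))
    (isOpen_set_pi Set.finite_univ fun i _ => isOpen_Ioi) hV hdisj
  have hf_closure : ∀ a, x ≤ a → f a ≤ c := by
    have hsub : closure O ⊆ {a | f a ≤ c} :=
      closure_minimal (fun a ha => (hfO a ha).le) (isClosed_le f.continuous continuous_const)
    intro a ha
    refine hsub ?_
    rw [closure_pi_set]
    simpa [closure_Ioi] using ha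
  set lam : ι → ℝ := fun i => -f fun j => if i = j then 1 else 0
  have hf : ∀ v, f v = -∑ i, lam i * v i := fun v => by
    rw [← f.coe_coe, LinearMap.pi_apply_eq_sum_univ]
    simp [lam, mul_comm]
  have hfx : c ≤ f x := hfV x hx
  refine ⟨lam, fun i => ?_, ?_, fun v hv => ?_⟩
  · have h := hf_closure (x + fun j => if i = j then 1 else 0)
      (le_add_of_nonneg_right fun j => by positivity)
    rw [map_add] at h
    simp only [lam]
    linarith
  · have h := hfO (x + fun _ => 1) fun i _ => by simp
    rw [map_add, hf fun _ => 1] at h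
    simp only [mul_one] at h
    have hsum : ∑ _i : ι, (0 : ℝ) < ∑ i, lam i := by
      rw [sum_const_zero]
      linarith
    obtain ⟨i, -, hi⟩ := exists_lt_of_sum_lt hsum
    exact ⟨i, hi⟩
  · have h := hfV v hv
    have h' := hf_closure x le_rfl
    rw [hf] at h h'
    linarith

theorem Finset.exists_nonneg_weights_of_not_strictly_dominated {α : Type*} (s : Finset α)
    {V : Set (α → ℝ)} (hV : Convex ℝ V) {x : α → ℝ} (hx : x ∈ V)
    (hmax : ∀ v ∈ V, ∃ i ∈ s, v i ≤ x i) :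
    ∃ lam : α → ℝ, (∀ i ∈ s, 0 ≤ lam i) ∧ (∃ i ∈ s, 0 < lam i) ∧
      ∀ v ∈ V, ∑ i ∈ s, lam i * v i ≤ ∑ i ∈ s, lam i * x i := by
  classical
  let restrict : (α → ℝ) →ₗ[ℝ] (s → ℝ) := LinearMap.funLeft ℝ ℝ Subtype.val
  obtain ⟨lam, hlam0, ⟨i, hi⟩, hsupp⟩ :=
    _root_.exists_nonneg_weights_of_not_strictly_dominated (hV.linear_image restrict)
      (Set.mem_image_of_mem restrict hx) (by
        rintro _ ⟨v, hv, rfl⟩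
        obtain ⟨i, hi, hvi⟩ := hmax v hv
        exact ⟨⟨i, hi⟩, hvi⟩)
  let lam' : α → ℝ := fun i => if hi : i ∈ s then lam ⟨i, hi⟩ else 0
  have hsum : ∀ v : α → ℝ, ∑ i ∈ s, lam' i * v i = ∑ i : s, lam i * restrict v i := fun v => by
    rw [← Finset.sum_coe_sort]
    exact Finset.sum_congr rfl fun i _ => by simp [lam', restrict, LinearMap.funLeft]
  refine ⟨lam', fun i hi => by simpa [lam', hi] using hlam0 ⟨i, hi⟩,
    ⟨i, i.2, by simpa [lam'] using hi⟩, fun v hv => ?_⟩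
  rw [hsum, hsum]
  exact hsupp _ (Set.mem_image_of_mem restrict hv)

theorem MeasureTheory.integral_lt_integral_of_forall_lt {Ω : Type*} [MeasurableSpace Ω]
    {μ : Measure Ω} [NeZero μ] {f g : Ω → ℝ} (hf : Integrable f μ) (hg : Integrable g μ)
    (h : ∀ ω, f ω < g ω) : ∫ ω, f ω ∂μ < ∫ ω, g ω ∂μ := by
  rw [← sub_pos, ← integral_sub hg hf]
  have hsupp : Function.support (fun ω => g ω - f ω) = Set.univ :=
    Set.eq_univ_of_forall fun ω => (sub_pos.2 (h ω)).ne'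
  refine (integral_pos_iff_support_of_nonneg (fun ω => (sub_pos.2 (h ω)).le) (hg.sub hf)).2 ?_
  rw [hsupp]
  exact Measure.measure_univ_pos.2 (NeZero.ne μ)

section Numeraire

variable {Ω : Type*} {ℱ : ℕ → MeasurableSpace Ω} {T : ℕ} {B : ℕ → Ω → ℝ}

structure IsNumeraire (ℱ : ℕ → MeasurableSpace Ω) (T : ℕ) (B : ℕ → Ω → ℝ) : Prop where
  measurable : ∀ t ∈ Icc 1 T, Measurable[ℱ t] (B t)
  one_le : ∀ t ∈ Icc 1 T, ∀ ω, 1 ≤ B t ω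
  bounded : ∀ t ∈ Icc 1 T, ∃ M, ∀ ω, B t ω ≤ M

theorem isNumeraire_of_interestRate (hℱmono : Monotone ℱ) {r : ℕ → Ω → ℝ}
    (hr_meas : ∀ t ∈ Icc 1 T, Measurable[ℱ (t - 1)] (r t))
    (hr_nonneg : ∀ t ∈ Icc 1 T, ∀ ω, 0 ≤ r t ω)
    (hr_bdd : ∀ t ∈ Icc 1 T, ∃ C : ℝ, ∀ ω, r t ω ≤ C)
    (hB : ∀ t ω, B t ω = ∏ k ∈ Icc 1 t, (1 + r k ω)) : IsNumeraire ℱ T B := by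
  have hsub : ∀ t ∈ Icc 1 T, ∀ k ∈ Icc 1 t, k ∈ Icc 1 T := fun t ht k hk =>
    mem_Icc.2 ⟨(mem_Icc.1 hk).1, (mem_Icc.1 hk).2.trans (mem_Icc.1 ht).2⟩
  choose! C hC using hr_bdd
  refine ⟨fun t ht => ?_, fun t ht ω => ?_, fun t ht => ⟨∏ k ∈ Icc 1 t, (1 + C k), fun ω => ?_⟩⟩
  · rw [funext (hB t)]
    refine Finset.measurable_prod _ fun k hk => ?_
    exact measurable_const.add ((hr_meas k (hsub t ht k hk)).mono
      (hℱmono ((Nat.sub_le k 1).trans (mem_Icc.1 hk).2)) le_rfl)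
  · rw [hB]
    exact one_le_prod fun k hk => le_add_of_nonneg_right (hr_nonneg k (hsub t ht k hk) ω)
  · rw [hB]
    exact prod_le_prod (fun k hk => by linarith [hr_nonneg k (hsub t ht k hk) ω])
      fun k hk => by linarith [hC k (hsub t ht k hk) ω]

theorem IsNumeraire.ne_zero (hB : IsNumeraire ℱ T B) {t : ℕ} (ht : t ∈ Icc 1 T) (ω : Ω) :
    B t ω ≠ 0 :=
  (zero_lt_one.trans_le (hB.one_le t ht ω)).ne'

theorem IsNumeraire.add_mul_div (hB : IsNumeraire ℱ T B) {t : ℕ} (ht : t ∈ Icc 1 T) (ω : Ω)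
    (x c : ℝ) : (x + c * B t ω) / B t ω = x / B t ω + c := by
  rw [add_div, mul_div_cancel_right₀ _ (hB.ne_zero ht ω)]

end Numeraire

section Allocation

variable {Ω : Type*} [mΩ : MeasurableSpace Ω] {μ : Measure Ω} {T : ℕ}
  {ℱ : ℕ → MeasurableSpace Ω} {B : ℕ → Ω → ℝ} {W : Ω → ℝ}

theorem IsAlloc.integrable_comp [IsFiniteMeasure μ] {Y : ℕ → Ω → ℝ}
    (hY : IsAlloc μ T ℱ B W Y) (hB : IsNumeraire ℱ T B) (hℱle : ∀ t, ℱ t ≤ mΩ) {t : ℕ}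
    (ht : t ∈ Icc 1 T) {v : ℝ → ℝ} (hv : Continuous v) :
    Integrable (fun ω => v (Y t ω / B t ω)) μ := by
  obtain ⟨hm, C, hC⟩ := hY.1 t ht
  obtain ⟨D, hD⟩ := (isCompact_Icc (a := -C) (b := C)).exists_bound_of_continuousOn hv.continuousOn
  refine Integrable.of_bound ((hv.measurable.comp ((hm.mono (hℱle t) le_rfl).div
    ((hB.measurable t ht).mono (hℱle t) le_rfl))).aestronglyMeasurable) D ?_
  filter_upwards [hC] with ω hω
  refine hD _ (abs_le.1 ?_)
  rw [abs_div]
  exact (div_le_self (abs_nonneg _) ((hB.one_le t ht ω).trans (le_abs_self _))).trans hω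

theorem IsAlloc.convexComb {Y Z : ℕ → Ω → ℝ} (hY : IsAlloc μ T ℱ B W Y)
    (hZ : IsAlloc μ T ℱ B W Z) {a b : ℝ} (hab : a + b = 1) :
    IsAlloc μ T ℱ B W fun t ω => a * Y t ω + b * Z t ω := by
  refine ⟨fun t ht => ?_, ?_⟩
  · obtain ⟨hYm, CY, hCY⟩ := hY.1 t ht
    obtain ⟨hZm, CZ, hCZ⟩ := hZ.1 t ht
    refine ⟨(hYm.const_mul a).add (hZm.const_mul b), |a| * CY + |b| * CZ, ?_⟩
    filter_upwards [hCY, hCZ] with ω hYω hZω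
    calc |a * Y t ω + b * Z t ω| ≤ |a| * |Y t ω| + |b| * |Z t ω| := by
          rw [← abs_mul, ← abs_mul]; exact abs_add_le _ _
      _ ≤ |a| * CY + |b| * CZ := by gcongr
  · filter_upwards [hY.2, hZ.2] with ω hYω hZω
    calc ∑ t ∈ Icc 1 T, (a * Y t ω + b * Z t ω) / B t ω
        = a * ∑ t ∈ Icc 1 T, Y t ω / B t ω + b * ∑ t ∈ Icc 1 T, Z t ω / B t ω := by
          rw [mul_sum, mul_sum, ← sum_add_distrib]
          exact sum_congr rfl fun t _ => by ring
      _ = W ω := by rw [hYω, hZω, ← add_mul, hab, one_mul]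

theorem IsAlloc.add_mul_numeraire {X : ℕ → Ω → ℝ} (hX : IsAlloc μ T ℱ B W X)
    (hB : IsNumeraire ℱ T B) {c : ℕ → ℝ} (hc : ∑ t ∈ Icc 1 T, c t = 0) :
    IsAlloc μ T ℱ B W fun t ω => X t ω + c t * B t ω := by
  refine ⟨fun t ht => ?_, ?_⟩
  · obtain ⟨hm, C, hC⟩ := hX.1 t ht
    obtain ⟨M, hM⟩ := hB.bounded t ht
    refine ⟨hm.add (measurable_const.mul (hB.measurable t ht)), C + |c t| * M, ?_⟩
    filter_upwards [hC] with ω hω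
    have hBω : |B t ω| ≤ M := by
      rw [abs_of_pos (zero_lt_one.trans_le (hB.one_le t ht ω))]
      exact hM ω
    calc |X t ω + c t * B t ω| ≤ |X t ω| + |c t| * |B t ω| := by
          rw [← abs_mul]; exact abs_add_le _ _
      _ ≤ C + |c t| * M := by gcongr
  · filter_upwards [hX.2] with ω hω
    rw [← add_zero (W ω), ← hω, ← hc, ← sum_add_distrib]
    exact sum_congr rfl fun t ht => hB.add_mul_div ht ω _ _

def utilityPossibilitySet (μ : Measure Ω) (T : ℕ) (ℱ : ℕ → MeasurableSpace Ω)
    (u : ℕ → ℝ → ℝ) (B : ℕ → Ω → ℝ) (W : Ω → ℝ) : Set (ℕ → ℝ) :=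
  {v | ∃ Y, IsAlloc μ T ℱ B W Y ∧ ∀ t ∈ Icc 1 T, v t ≤ ∫ ω, u t (Y t ω / B t ω) ∂μ}

theorem convex_utilityPossibilitySet [IsFiniteMeasure μ] (hB : IsNumeraire ℱ T B)
    (hℱle : ∀ t, ℱ t ≤ mΩ) {u : ℕ → ℝ → ℝ}
    (hu_conc : ∀ t ∈ Icc 1 T, ConcaveOn ℝ Set.univ (u t))
    (hu_cont : ∀ t ∈ Icc 1 T, Continuous (u t)) :
    Convex ℝ (utilityPossibilitySet μ T ℱ u B W) := by
  rintro v ⟨Y, hY, hvY⟩ w ⟨Z, hZ, hwZ⟩ a b ha hb hab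
  have hYZ := hY.convexComb hZ hab
  refine ⟨_, hYZ, fun t ht => ?_⟩
  have hYi := hY.integrable_comp hB hℱle ht (hu_cont t ht)
  have hZi := hZ.integrable_comp hB hℱle ht (hu_cont t ht)
  calc (a • v + b • w) t = a * v t + b * w t := rfl
    _ ≤ a * ∫ ω, u t (Y t ω / B t ω) ∂μ + b * ∫ ω, u t (Z t ω / B t ω) ∂μ := by
        gcongr
        exacts [hvY t ht, hwZ t ht]
    _ = ∫ ω, (a * u t (Y t ω / B t ω) + b * u t (Z t ω / B t ω)) ∂μ := by
        rw [integral_add (hYi.const_mul a) (hZi.const_mul b), integral_const_mul,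
          integral_const_mul]
    _ ≤ ∫ ω, u t ((a * Y t ω + b * Z t ω) / B t ω) ∂μ := by
        refine integral_mono ((hYi.const_mul a).add (hZi.const_mul b))
          (hYZ.integrable_comp hB hℱle ht (hu_cont t ht)) fun ω => ?_
        have h := (hu_conc t ht).2 (Set.mem_univ (Y t ω / B t ω))
          (Set.mem_univ (Z t ω / B t ω)) ha hb hab
        rw [smul_eq_mul, smul_eq_mul, smul_eq_mul, smul_eq_mul] at h
        calc _ ≤ _ := h
          _ = _ := by congr 1; ring

theorem forall_pos_of_maximizes_weighted_utility [IsFiniteMeasure μ] [NeZero μ]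
    (hB : IsNumeraire ℱ T B) (hℱle : ∀ t, ℱ t ≤ mΩ) {u : ℕ → ℝ → ℝ}
    (hu_mono : ∀ t ∈ Icc 1 T, StrictMono (u t)) (hu_cont : ∀ t ∈ Icc 1 T, Continuous (u t))
    {X : ℕ → Ω → ℝ} (hX : IsAlloc μ T ℱ B W X) {lam : ℕ → ℝ}
    (hlam : ∀ t ∈ Icc 1 T, 0 ≤ lam t) (hpos : ∃ s ∈ Icc 1 T, 0 < lam s)
    (hmax : ∀ Y, IsAlloc μ T ℱ B W Y →
      ∑ t ∈ Icc 1 T, lam t * ∫ ω, u t (Y t ω / B t ω) ∂μ ≤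
        ∑ t ∈ Icc 1 T, lam t * ∫ ω, u t (X t ω / B t ω) ∂μ) :
    ∀ t ∈ Icc 1 T, 0 < lam t := by
  intro t₀ ht₀
  obtain ⟨s, hs, hlam_s⟩ := hpos
  refine (hlam t₀ ht₀).lt_of_ne' fun hzero => ?_
  have hst : s ≠ t₀ := by
    rintro rfl
    exact hlam_s.ne' hzero
  set c : ℕ → ℝ := Pi.single s 1 - Pi.single t₀ 1
  have hY := hX.add_mul_numeraire hB (c := c) (by simp [c, sum_sub_distrib, hs, ht₀])
  refine (hmax _ hY).not_gt (sum_lt_sum (fun t ht => ?_) ⟨s, hs, ?_⟩)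
  · rcases eq_or_ne t t₀ with rfl | ht_ne
    · rw [hzero, zero_mul, zero_mul]
    refine mul_le_mul_of_nonneg_left (integral_mono
      (hX.integrable_comp hB hℱle ht (hu_cont t ht))
      (hY.integrable_comp hB hℱle ht (hu_cont t ht)) fun ω => ?_) (hlam t ht)
    have hc : 0 ≤ c t := by
      simp only [c, Pi.sub_apply, Pi.single_eq_of_ne ht_ne, sub_zero]
      exact (Pi.single_nonneg.2 zero_le_one : (0 : ℕ → ℝ) ≤ Pi.single s 1) t
    simp only [hB.add_mul_div ht ω]
    exact (hu_mono t ht).monotone (le_add_of_nonneg_right hc)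
  · refine mul_lt_mul_of_pos_left (integral_lt_integral_of_forall_lt
      (hX.integrable_comp hB hℱle hs (hu_cont s hs))
      (hY.integrable_comp hB hℱle hs (hu_cont s hs)) fun ω => ?_) hlam_s
    simp only [hB.add_mul_div hs ω]
    exact hu_mono s hs (lt_add_of_pos_right _ (by simp [c, hst]))

end Allocation

theorem paretoOptimal_iff_solves_problemLambda_general
    {Ω : Type*} [mΩ : MeasurableSpace Ω] (μ : Measure Ω) [IsProbabilityMeasure μ]
    (T : ℕ) (hT : 1 ≤ T)
    (ℱ : ℕ → MeasurableSpace Ω) (hℱmono : Monotone ℱ) (hℱle : ∀ t, ℱ t ≤ mΩ)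
    (r : ℕ → Ω → ℝ)
    (hr_meas : ∀ t ∈ Finset.Icc 1 T, Measurable[ℱ (t - 1)] (r t))
    (hr_nonneg : ∀ t ∈ Finset.Icc 1 T, ∀ ω, 0 ≤ r t ω)
    (hr_bdd : ∀ t ∈ Finset.Icc 1 T, ∃ C : ℝ, ∀ ω, r t ω ≤ C)
    (B : ℕ → Ω → ℝ) (hB : ∀ t ω, B t ω = ∏ k ∈ Finset.Icc 1 t, (1 + r k ω))
    (u : ℕ → ℝ → ℝ)
    (hu_conc : ∀ t ∈ Finset.Icc 1 T, StrictConcaveOn ℝ (Set.univ : Set ℝ) (u t))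
    (hu_deriv : ∀ t ∈ Finset.Icc 1 T, ∀ x : ℝ, 0 < deriv (u t) x)
    (W : Ω → ℝ)
    (X : ℕ → Ω → ℝ) (hX : IsAlloc μ T ℱ B W X) :
    (¬ ∃ Y, IsAlloc μ T ℱ B W Y ∧
        (∀ t ∈ Finset.Icc 1 T,
          ∫ ω, u t (X t ω / B t ω) ∂μ ≤ ∫ ω, u t (Y t ω / B t ω) ∂μ) ∧
        (∃ t₀ ∈ Finset.Icc 1 T,
          ∫ ω, u t₀ (X t₀ ω / B t₀ ω) ∂μ < ∫ ω, u t₀ (Y t₀ ω / B t₀ ω) ∂μ)) ↔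
    (∃ lam : ℕ → ℝ, (∀ t ∈ Finset.Icc 1 T, 0 < lam t) ∧
      ∀ Y, IsAlloc μ T ℱ B W Y →
        ∑ t ∈ Finset.Icc 1 T, lam t * ∫ ω, u t (Y t ω / B t ω) ∂μ ≤
          ∑ t ∈ Finset.Icc 1 T, lam t * ∫ ω, u t (X t ω / B t ω) ∂μ) := by
  have hBnum := isNumeraire_of_interestRate hℱmono hr_meas hr_nonneg hr_bdd hB
  have hu_cont : ∀ t ∈ Icc 1 T, Continuous (u t) := fun t ht =>
    Differentiable.continuous fun x => differentiableAt_of_deriv_ne_zero (hu_deriv t ht x).ne'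
  have hu_mono : ∀ t ∈ Icc 1 T, StrictMono (u t) := fun t ht =>
    strictMono_of_deriv_pos (hu_deriv t ht)
  constructor
  · intro hP
    have h1 : 1 ∈ Icc 1 T := mem_Icc.2 ⟨le_rfl, hT⟩
    obtain ⟨lam, hlam0, hpos, hsupp⟩ := (Icc 1 T).exists_nonneg_weights_of_not_strictly_dominated
      (convex_utilityPossibilitySet hBnum hℱle (fun t ht => (hu_conc t ht).concaveOn) hu_cont)
      (x := fun t => ∫ ω, u t (X t ω / B t ω) ∂μ) ⟨X, hX, fun _ _ => le_rfl⟩ (by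
        rintro v ⟨Y, hY, hvY⟩
        by_contra! hdom
        exact hP ⟨Y, hY, fun t ht => (hdom t ht).le.trans (hvY t ht),
          1, h1, (hdom 1 h1).trans_le (hvY 1 h1)⟩)
    have hsolves : ∀ Y, IsAlloc μ T ℱ B W Y →
        ∑ t ∈ Icc 1 T, lam t * ∫ ω, u t (Y t ω / B t ω) ∂μ ≤
          ∑ t ∈ Icc 1 T, lam t * ∫ ω, u t (X t ω / B t ω) ∂μ :=
      fun Y hY => hsupp _ ⟨Y, hY, fun _ _ => le_rfl⟩
    exact ⟨lam, forall_pos_of_maximizes_weighted_utility hBnum hℱle hu_mono hu_cont hX hlam0 hpos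
      hsolves, hsolves⟩
  · rintro ⟨lam, hlam, hsolves⟩ ⟨Y, hY, hge, t₀, ht₀, hgt⟩
    exact (hsolves Y hY).not_gt (sum_lt_sum
      (fun t ht => mul_le_mul_of_nonneg_left (hge t ht) (hlam t ht).le)
      ⟨t₀, ht₀, mul_lt_mul_of_pos_left hgt (hlam t₀ ht₀)⟩)

/-- Second welfare theorem analogue (Theorem 2.13): `(X_t) ∈ A(W)` is Pareto
optimal iff it solves Problem `P_λ` for some `λ ∈ (0,∞)^T`. -/
theorem paretoOptimal_iff_solves_problemLambda
    {Ω : Type*} [mΩ : MeasurableSpace Ω] (μ : Measure Ω) [IsProbabilityMeasure μ]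
    (T : ℕ) (hT : 1 ≤ T)
    (ℱ : ℕ → MeasurableSpace Ω) (hℱmono : Monotone ℱ) (hℱle : ∀ t, ℱ t ≤ mΩ)
    (r : ℕ → Ω → ℝ)
    (hr_meas : ∀ t ∈ Finset.Icc 1 T, Measurable[ℱ (t - 1)] (r t))
    (hr_nonneg : ∀ t ∈ Finset.Icc 1 T, ∀ ω, 0 ≤ r t ω)
    (hr_bdd : ∀ t ∈ Finset.Icc 1 T, ∃ C : ℝ, ∀ ω, r t ω ≤ C)
    (B : ℕ → Ω → ℝ) (hB : ∀ t ω, B t ω = ∏ k ∈ Finset.Icc 1 t, (1 + r k ω))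
    (u : ℕ → ℝ → ℝ)
    (hu_conc : ∀ t ∈ Finset.Icc 1 T, StrictConcaveOn ℝ (Set.univ : Set ℝ) (u t))
    (hu_diff : ∀ t ∈ Finset.Icc 1 T, ContDiff ℝ 1 (u t))
    (hu_deriv : ∀ t ∈ Finset.Icc 1 T, ∀ x : ℝ, 0 < deriv (u t) x)
    (W : Ω → ℝ) (hWmeas : Measurable[ℱ T] W) (hWbdd : ∃ C : ℝ, ∀ᵐ ω ∂μ, |W ω| ≤ C)
    (X : ℕ → Ω → ℝ) (hX : IsAlloc μ T ℱ B W X) :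
    (¬ ∃ Y, IsAlloc μ T ℱ B W Y ∧
        (∀ t ∈ Finset.Icc 1 T,
          ∫ ω, u t (X t ω / B t ω) ∂μ ≤ ∫ ω, u t (Y t ω / B t ω) ∂μ) ∧
        (∃ t₀ ∈ Finset.Icc 1 T,
          ∫ ω, u t₀ (X t₀ ω / B t₀ ω) ∂μ < ∫ ω, u t₀ (Y t₀ ω / B t₀ ω) ∂μ)) ↔
    (∃ lam : ℕ → ℝ, (∀ t ∈ Finset.Icc 1 T, 0 < lam t) ∧
      ∀ Y, IsAlloc μ T ℱ B W Y →
        ∑ t ∈ Finset.Icc 1 T, lam t * ∫ ω, u t (Y t ω / B t ω) ∂μ ≤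
          ∑ t ∈ Finset.Icc 1 T, lam t * ∫ ω, u t (X t ω / B t ω) ∂μ) :=
  paretoOptimal_iff_solves_problemLambda_general (mΩ := mΩ) μ T hT ℱ hℱmono hℱle r hr_meas hr_nonneg
    hr_bdd B hB u hu_conc hu_deriv W X hX
end
end

section
/- Solution of the martingale problem M: for W ∈ L^∞ and α = (α_1,...,α_T) ∈ (0,∞)^T, the process (M_t(α,W))_{t∈𝕋} is a positive (F_t)-martingale satisfying ∏_{t∈𝕋} M_t(α,W)^{1/α_t} = exp(−W) a.s., and it is the unique such process: any positive (F_t)-martingale (M_t)_{t∈𝕋} with ∏_{t∈𝕋} M_t^{1/α_t} = exp(−W) a.s. satisfies M_t = M_t(α,W) for all t ∈ 𝕋. -/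
/-!
For a process `N` write `J_s(N) = log N_s / β_s + ∑_{t<s} log N_t / α_t`, the logarithm of
`N_s^{1/β_s} ∏_{t<s} N_t^{1/α_t}`. Since `β_T = α_T`, the product identity is `J_T(N) = -W`.

If `N` is a positive martingale with the product identity, backward induction gives
`J_s(N) = log L_s / β_s` for every `s`: knowing it at `s + 1` means `N_{s+1} = G L_{s+1}` with
`G` already `ℱ_s`-measurable, so `N_s = G E[L_{s+1} | ℱ_s] = G L_s^{β_{s+1}/β_s}`, which is the
identity at `s` because `1/β_s = 1/α_s + 1/β_{s+1}`. These equations are triangular in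
`(log N_t)_t`, so they determine `N`.

The explicit process `M(α, W)` is bounded away from `0` and `∞` because `W` is bounded. It is a
martingale because `M_{s+1}` is `L_{s+1}` times an `ℱ_s`-measurable factor and
`E[L_{s+1} | ℱ_s] = L_s^{β_{s+1}/β_s}`, and a forward induction shows `J_s(M) = log L_s / β_s`,
whose case `s = T` is the product identity.
-/

open MeasureTheory Finset Real

noncomputable section

lemma neg_div_add_div_eq_one {a b b' : ℝ} (hb' : b' ≠ 0) (h : 1 / b = 1 / a + 1 / b') :
    -(b' / a) + b' / b = 1 := by
  linear_combination b' * h + mul_inv_cancel₀ hb'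

lemma div_add_eq_of_eq_neg_mul_add {a b b' n S ℓ : ℝ} (hb' : b' ≠ 0)
    (h : 1 / b = 1 / a + 1 / b') (hn : n = -b' * (S + n / a) + b' / b * ℓ) :
    n / b + S = ℓ / b := by
  linear_combination (b')⁻¹ * hn + n * h - (S + n / a - ℓ / b) * mul_inv_cancel₀ hb'

section Weights

variable {T : ℕ} {α β : ℕ → ℝ}

lemma one_div_beta_eq_add (hβ : ∀ t ∈ Icc 1 T, 1 / β t = ∑ k ∈ Icc t T, 1 / α k) :
    ∀ s ∈ Ico 1 T, 1 / β s = 1 / α s + 1 / β (s + 1) := by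
  intro s hs
  obtain ⟨hs1, hsT⟩ := mem_Ico.mp hs
  rw [hβ s (mem_Icc.mpr ⟨hs1, hsT.le⟩), hβ (s + 1) (mem_Icc.mpr ⟨by omega, hsT⟩),
    ← insert_Icc_add_one_left_eq_Icc hsT.le, sum_insert (by simp)]

lemma beta_last (hT : 1 ≤ T) (hβ : ∀ t ∈ Icc 1 T, 1 / β t = ∑ k ∈ Icc t T, 1 / α k) :
    β T = α T := by
  simpa using hβ T (mem_Icc.mpr ⟨hT, le_rfl⟩)

lemma beta_pos (hα : ∀ t ∈ Icc 1 T, 0 < α t)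
    (hβ : ∀ t ∈ Icc 1 T, 1 / β t = ∑ k ∈ Icc t T, 1 / α k) : ∀ t ∈ Icc 1 T, 0 < β t := by
  intro t ht
  obtain ⟨ht1, htT⟩ := mem_Icc.mp ht
  have hsum : 0 < ∑ k ∈ Icc t T, 1 / α k :=
    sum_pos (fun k hk => one_div_pos.mpr (hα k (by grind))) ⟨t, mem_Icc.mpr ⟨le_rfl, htT⟩⟩
  exact one_div_pos.mp (hβ t ht ▸ hsum)

lemma eq_of_div_add_sum_div_eq {x y : ℕ → ℝ} (hβ : ∀ s ∈ Icc 1 T, β s ≠ 0)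
    (h : ∀ s ∈ Icc 1 T, x s / β s + ∑ t ∈ Ico 1 s, x t / α t
      = y s / β s + ∑ t ∈ Ico 1 s, y t / α t) :
    ∀ s ∈ Icc 1 T, x s = y s := by
  intro s
  induction s using Nat.strong_induction_on with
  | _ s ih =>
    intro hs
    have hprev : ∑ t ∈ Ico 1 s, x t / α t = ∑ t ∈ Ico 1 s, y t / α t :=
      sum_congr rfl fun t ht => by rw [ih t (mem_Ico.mp ht).2 (by grind)]
    have hs' := h s hs
    rwa [hprev, add_left_inj, div_left_inj' (hβ s hs)] at hs'

lemma div_add_sum_div_eq_of_eq_sub_sum {m ℓ : ℕ → ℝ} (hβ0 : ∀ s ∈ Icc 1 T, β s ≠ 0)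
    (hchain : ∀ s ∈ Ico 1 T, 1 / β s = 1 / α s + 1 / β (s + 1))
    (hm : ∀ t ∈ Icc 1 T, m t = ℓ t - ∑ k ∈ Ico 1 t, β (k + 1) / α k * ℓ k) :
    ∀ s ∈ Icc 1 T, m s / β s + ∑ t ∈ Ico 1 s, m t / α t = ℓ s / β s := by
  intro s hs
  obtain ⟨hs1, hsT⟩ := mem_Icc.mp hs
  induction s, hs1 using Nat.le_induction with
  | base => simp [hm 1 hs]
  | succ s hs1 ih =>
    have hsT' : s < T := hsT
    have ih := ih (mem_Icc.mpr ⟨hs1, hsT'.le⟩) hsT'.le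
    have hms := hm s (mem_Icc.mpr ⟨hs1, hsT'.le⟩)
    have hms1 := hm (s + 1) hs
    have hch := hchain s (mem_Ico.mpr ⟨hs1, hsT'⟩)
    have hb := hβ0 (s + 1) hs
    rw [sum_Ico_succ_top hs1] at hms1 ⊢
    linear_combination ih + (β (s + 1))⁻¹ * hms1 - (β (s + 1))⁻¹ * hms + (ℓ s - m s) * hch
      - (α s)⁻¹ * ℓ s * mul_inv_cancel₀ hb

end Weights

section BoundedAwayFromZero

variable {Ω : Type*} {m m0 : MeasurableSpace Ω} {μ : Measure Ω} {f g : Ω → ℝ}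

def AEBddAwayFromZero (μ : Measure Ω) (f : Ω → ℝ) : Prop :=
  ∃ a b : ℝ, 0 < a ∧ ∀ᵐ ω ∂μ, f ω ∈ Set.Icc a b

namespace AEBddAwayFromZero

lemma ae_pos (hf : AEBddAwayFromZero μ f) : ∀ᵐ ω ∂μ, 0 < f ω := by
  obtain ⟨a, b, ha, h⟩ := hf
  filter_upwards [h] with ω hω using ha.trans_le hω.1

lemma congr (hf : AEBddAwayFromZero μ f) (hfg : f =ᵐ[μ] g) : AEBddAwayFromZero μ g := by
  obtain ⟨a, b, ha, h⟩ := hf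
  exact ⟨a, b, ha, by filter_upwards [h, hfg] with ω hω hfgω using hfgω ▸ hω⟩

lemma integrable [IsFiniteMeasure μ] (hf : AEBddAwayFromZero μ f)
    (hm : AEStronglyMeasurable f μ) : Integrable f μ := by
  obtain ⟨a, b, ha, h⟩ := hf
  refine Integrable.of_bound hm b ?_
  filter_upwards [h] with ω hω
  rw [norm_of_nonneg (ha.le.trans hω.1)]
  exact hω.2

lemma rpow (hf : AEBddAwayFromZero μ f) (r : ℝ) :
    AEBddAwayFromZero μ fun ω => f ω ^ r := by
  obtain ⟨a, b, ha, h⟩ := hf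
  rcases le_total 0 r with hr | hr
  · refine ⟨a ^ r, b ^ r, rpow_pos_of_pos ha r, ?_⟩
    filter_upwards [h] with ω hω
    exact ⟨rpow_le_rpow ha.le hω.1 hr, rpow_le_rpow (ha.le.trans hω.1) hω.2 hr⟩
  · refine ⟨max a b ^ r, a ^ r, rpow_pos_of_pos (ha.trans_le (le_max_left a b)) r, ?_⟩
    filter_upwards [h] with ω hω
    exact ⟨rpow_le_rpow_of_nonpos (ha.trans_le hω.1) (hω.2.trans (le_max_right a b)) hr,
      rpow_le_rpow_of_nonpos ha hω.1 hr⟩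

lemma mul (hf : AEBddAwayFromZero μ f) (hg : AEBddAwayFromZero μ g) :
    AEBddAwayFromZero μ (f * g) := by
  obtain ⟨a, b, ha, hfab⟩ := hf
  obtain ⟨c, d, hc, hgcd⟩ := hg
  refine ⟨a * c, b * d, mul_pos ha hc, ?_⟩
  filter_upwards [hfab, hgcd] with ω hf hg
  exact ⟨mul_le_mul hf.1 hg.1 hc.le (ha.le.trans hf.1),
    mul_le_mul hf.2 hg.2 (hc.le.trans hg.1) ((ha.le.trans hf.1).trans hf.2)⟩

lemma prod {ι : Type*} (s : Finset ι) {F : ι → Ω → ℝ}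
    (hF : ∀ i ∈ s, AEBddAwayFromZero μ (F i)) :
    AEBddAwayFromZero μ fun ω => ∏ i ∈ s, F i ω := by
  classical
  induction s using Finset.induction_on with
  | empty => exact ⟨1, 1, one_pos, by simp⟩
  | insert i s hi ih =>
    simp only [prod_insert hi]
    exact (hF i (mem_insert_self i s)).mul (ih fun j hj => hF j (mem_insert_of_mem hj))

lemma condExp [IsFiniteMeasure μ] (hm : m ≤ m0) (hf : AEBddAwayFromZero μ f)
    (hint : Integrable f μ) : AEBddAwayFromZero μ (μ[f | m]) := by
  obtain ⟨a, b, ha, h⟩ := hf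
  have hlo := condExp_mono (m := m) (integrable_const a) hint (h.mono fun ω hω => hω.1)
  have hup := condExp_mono (m := m) hint (integrable_const b) (h.mono fun ω hω => hω.2)
  rw [condExp_const hm] at hlo hup
  exact ⟨a, b, ha, by filter_upwards [hlo, hup] with ω h1 h2 using ⟨h1, h2⟩⟩

lemma exp_mul {W : Ω → ℝ} (hW : ∃ C, ∀ᵐ ω ∂μ, |W ω| ≤ C) (c : ℝ) :
    AEBddAwayFromZero μ fun ω => exp (c * W ω) := by
  obtain ⟨C, hC⟩ := hW
  refine ⟨exp (-(|c| * C)), exp (|c| * C), exp_pos _, ?_⟩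
  filter_upwards [hC] with ω hω
  have : |c * W ω| ≤ |c| * C := by
    rw [abs_mul]; exact mul_le_mul_of_nonneg_left hω (abs_nonneg c)
  exact ⟨exp_le_exp.mpr (by linarith [neg_abs_le (c * W ω)]),
    exp_le_exp.mpr ((le_abs_self _).trans this)⟩

end AEBddAwayFromZero

end BoundedAwayFromZero

section SubSigmaAlgebra

variable {Ω : Type*} {m m0 : MeasurableSpace Ω} {μ : Measure Ω}

/- Unlike `Finset.aestronglyMeasurable_fun_prod`, this allows `μ` to live on a finer σ-algebra
than `m`. -/
@[to_additive]
lemma Finset.aestronglyMeasurable_fun_prod' {ι M : Type*} [CommMonoid M] [TopologicalSpace M]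
    [ContinuousMul M] (s : Finset ι) {f : ι → Ω → M}
    (hf : ∀ i ∈ s, AEStronglyMeasurable[m] (f i) μ) :
    AEStronglyMeasurable[m] (fun ω => ∏ i ∈ s, f i ω) μ := by
  classical
  induction s using Finset.induction_on with
  | empty => simpa using aestronglyMeasurable_const
  | insert i s hi ih =>
    simp only [prod_insert hi]
    exact (hf i (mem_insert_self i s)).mul (ih fun j hj => hf j (mem_insert_of_mem hj))

lemma Measurable.comp_aestronglyMeasurable {f : Ω → ℝ} {φ : ℝ → ℝ} (hφ : Measurable φ)
    (hf : AEStronglyMeasurable[m] f μ) : AEStronglyMeasurable[m] (fun ω => φ (f ω)) μ :=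
  ⟨fun ω => φ (hf.mk f ω), (hφ.comp hf.stronglyMeasurable_mk.measurable).stronglyMeasurable,
    hf.ae_eq_mk.fun_comp φ⟩

lemma condExp_ae_eq_mul_of_ae_eq_mul {X G Y Z : Ω → ℝ} (hG : AEStronglyMeasurable[m] G μ)
    (hX : Integrable X μ) (hY : Integrable Y μ) (hXGY : X =ᵐ[μ] G * Y)
    (hYZ : μ[Y | m] =ᵐ[μ] Z) : μ[X | m] =ᵐ[μ] G * Z :=
  (condExp_congr_ae hXGY).trans <|
    (condExp_mul_of_aestronglyMeasurable_left hG (hX.congr hXGY) hY).trans <|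
      hYZ.mono fun ω h => by simp only [Pi.mul_apply, h]

lemma condExp_ae_eq_of_condExp_succ_ae_eq [IsFiniteMeasure μ] {ℱ : ℕ → MeasurableSpace Ω}
    (hℱmono : Monotone ℱ) (hℱle : ∀ t, ℱ t ≤ m0) {f : ℕ → Ω → ℝ} {a b : ℕ}
    (hmeas : ∀ t ∈ Icc a b, AEStronglyMeasurable[ℱ t] (f t) μ)
    (hint : ∀ t ∈ Icc a b, Integrable (f t) μ)
    (hstep : ∀ t ∈ Ico a b, μ[f (t + 1) | ℱ t] =ᵐ[μ] f t) :
    ∀ s ∈ Icc a b, ∀ t ∈ Icc a b, s ≤ t → μ[f t | ℱ s] =ᵐ[μ] f s := by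
  intro s hs t ht hst
  induction t, hst using Nat.le_induction with
  | base => exact condExp_of_aestronglyMeasurable' (hℱle s) (hmeas s hs) (hint s hs)
  | succ t hst ih =>
    have ht' : t ∈ Icc a b := mem_Icc.mpr ⟨(mem_Icc.mp hs).1.trans hst, by grind⟩
    calc μ[f (t + 1) | ℱ s] =ᵐ[μ] μ[μ[f (t + 1) | ℱ t] | ℱ s] :=
          (condExp_condExp_of_le (hℱmono hst) (hℱle t)).symm
      _ =ᵐ[μ] μ[f t | ℱ s] := condExp_congr_ae (hstep t (by grind))
      _ =ᵐ[μ] f s := ih ht'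

end SubSigmaAlgebra

section BackwardRecursion

variable {Ω : Type*} [mΩ : MeasurableSpace Ω] {μ : Measure Ω} [IsFiniteMeasure μ]
  {ℱ : ℕ → MeasurableSpace Ω} {T : ℕ} {α β : ℕ → ℝ} {W : Ω → ℝ} {L : ℕ → Ω → ℝ}

lemma aestronglyMeasurable_and_bddAwayFromZero_of_backward (hℱle : ∀ t, ℱ t ≤ mΩ)
    (hWmeas : Measurable[ℱ T] W) (hWbdd : ∃ C, ∀ᵐ ω ∂μ, |W ω| ≤ C)
    (hLT : L T =ᵐ[μ] fun ω => exp (-(α T) * W ω))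
    (hLstep : ∀ s ∈ Ico 1 T, L s =ᵐ[μ] fun ω => (μ[L (s + 1) | ℱ s]) ω ^ (β s / β (s + 1))) :
    ∀ t ∈ Icc 1 T, AEStronglyMeasurable[ℱ t] (L t) μ ∧ AEBddAwayFromZero μ (L t) := by
  intro t ht
  obtain ⟨ht1, htT⟩ := mem_Icc.mp ht
  clear ht
  induction htT using Nat.decreasingInduction with
  | self =>
    exact ⟨((measurable_exp.comp (hWmeas.const_mul _)).aestronglyMeasurable).congr hLT.symm,
      (AEBddAwayFromZero.exp_mul hWbdd _).congr hLT.symm⟩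
  | of_succ s hsT ih =>
    obtain ⟨hmeas, hbdd⟩ := ih (by omega)
    have hstep := hLstep s (mem_Ico.mpr ⟨ht1, hsT⟩)
    have hcond := hbdd.condExp (hℱle s) (hbdd.integrable (hmeas.mono (hℱle _)))
    exact ⟨((measurable_id.pow_const _).comp_aestronglyMeasurable
        stronglyMeasurable_condExp.aestronglyMeasurable).congr hstep.symm,
      (hcond.rpow _).congr hstep.symm⟩

lemma condExp_succ_ae_eq_rpow (hℱle : ∀ t, ℱ t ≤ mΩ) (hβ0 : ∀ t ∈ Icc 1 T, β t ≠ 0)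
    (hL : ∀ t ∈ Icc 1 T, AEStronglyMeasurable[ℱ t] (L t) μ ∧ AEBddAwayFromZero μ (L t))
    (hLstep : ∀ s ∈ Ico 1 T, L s =ᵐ[μ] fun ω => (μ[L (s + 1) | ℱ s]) ω ^ (β s / β (s + 1))) :
    ∀ s ∈ Ico 1 T, μ[L (s + 1) | ℱ s] =ᵐ[μ] fun ω => L s ω ^ (β (s + 1) / β s) := by
  intro s hs
  obtain ⟨hs1, hsT⟩ := mem_Ico.mp hs
  obtain ⟨hmeas, hbdd⟩ := hL (s + 1) (mem_Icc.mpr ⟨by omega, hsT⟩)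
  have hpos := (hbdd.condExp (hℱle s) (hbdd.integrable (hmeas.mono (hℱle _)))).ae_pos
  filter_upwards [hLstep s hs, hpos] with ω hω hpos
  rw [hω, ← rpow_mul hpos.le, div_mul_div_cancel₀ (hβ0 (s + 1) (mem_Icc.mpr ⟨by omega, hsT⟩)),
    div_self (hβ0 s (mem_Icc.mpr ⟨hs1, hsT.le⟩)), rpow_one]

end BackwardRecursion

section Pointwise

variable {Ω : Type*} {T : ℕ} {α β : ℕ → ℝ} {L N : ℕ → Ω → ℝ} {ω : Ω}

def weightedLogSum (α β : ℕ → ℝ) (N : ℕ → Ω → ℝ) (s : ℕ) (ω : Ω) : ℝ :=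
  log (N s ω) / β s + ∑ t ∈ Ico 1 s, log (N t ω) / α t

lemma prod_rpow_eq_exp_weightedLogSum (hT : 1 ≤ T) (hβT : β T = α T)
    (hN : ∀ t ∈ Icc 1 T, 0 < N t ω) :
    ∏ t ∈ Icc 1 T, N t ω ^ (1 / α t) = exp (weightedLogSum α β N T ω) := by
  rw [prod_congr rfl fun t ht => rpow_def_of_pos (hN t ht) _, ← exp_sum, weightedLogSum, hβT,
    ← Ico_add_one_right_eq_Icc, sum_Ico_succ_top hT, add_comm]
  simp only [mul_one_div]

def solutionProcess (α β : ℕ → ℝ) (L : ℕ → Ω → ℝ) (t : ℕ) (ω : Ω) : ℝ :=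
  L t ω * ∏ k ∈ Ico 1 t, L k ω ^ (-(β (k + 1) / α k))

lemma solutionProcess_pos {t : ℕ} (hLt : 0 < L t ω) (hL : ∀ k ∈ Ico 1 t, 0 < L k ω) :
    0 < solutionProcess α β L t ω :=
  mul_pos hLt (prod_pos fun k hk => rpow_pos_of_pos (hL k hk) _)

lemma log_solutionProcess {t : ℕ} (hLt : 0 < L t ω) (hL : ∀ k ∈ Ico 1 t, 0 < L k ω) :
    log (solutionProcess α β L t ω)
      = log (L t ω) - ∑ k ∈ Ico 1 t, β (k + 1) / α k * log (L k ω) := by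
  have hpow : ∀ k ∈ Ico 1 t, 0 < L k ω ^ (-(β (k + 1) / α k)) :=
    fun k hk => rpow_pos_of_pos (hL k hk) _
  rw [solutionProcess, log_mul hLt.ne' (prod_pos hpow).ne', log_prod fun k hk => (hpow k hk).ne',
    sub_eq_add_neg, ← sum_neg_distrib]
  congr 1
  exact sum_congr rfl fun k hk => by rw [log_rpow (hL k hk)]; ring

lemma weightedLogSum_solutionProcess (hβ0 : ∀ s ∈ Icc 1 T, β s ≠ 0)
    (hchain : ∀ s ∈ Ico 1 T, 1 / β s = 1 / α s + 1 / β (s + 1))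
    (hL : ∀ k ∈ Icc 1 T, 0 < L k ω) :
    ∀ s ∈ Icc 1 T, weightedLogSum α β (solutionProcess α β L) s ω = log (L s ω) / β s :=
  div_add_sum_div_eq_of_eq_sub_sum hβ0 hchain fun t ht => log_solutionProcess (hL t ht)
    fun k hk => hL k (by grind)

end Pointwise

section MartingaleProblem

variable {Ω : Type*} [mΩ : MeasurableSpace Ω] {μ : Measure Ω}
  {ℱ : ℕ → MeasurableSpace Ω} {T : ℕ} {α β : ℕ → ℝ} {W : Ω → ℝ} {L : ℕ → Ω → ℝ}

def IsMartingaleSolution (μ : Measure Ω) (ℱ : ℕ → MeasurableSpace Ω) (T : ℕ) (α : ℕ → ℝ)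
    (W : Ω → ℝ) (N : ℕ → Ω → ℝ) : Prop :=
  (∀ t ∈ Icc 1 T, ∀ᵐ ω ∂μ, 0 < N t ω) ∧
  (∀ t ∈ Icc 1 T, AEStronglyMeasurable[ℱ t] (N t) μ) ∧
  (∀ t ∈ Icc 1 T, Integrable (N t) μ) ∧
  (∀ s ∈ Icc 1 T, ∀ t ∈ Icc 1 T, s ≤ t → μ[N t | ℱ s] =ᵐ[μ] N s) ∧
  (∀ᵐ ω ∂μ, ∏ t ∈ Icc 1 T, N t ω ^ (1 / α t) = exp (-W ω))

lemma IsMartingaleSolution.congr {N N' : ℕ → Ω → ℝ} (hN : IsMartingaleSolution μ ℱ T α W N)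
    (hNN' : ∀ t ∈ Icc 1 T, N t =ᵐ[μ] N' t) : IsMartingaleSolution μ ℱ T α W N' := by
  obtain ⟨hpos, hmeas, hint, hmart, hprod⟩ := hN
  refine ⟨fun t ht => ?_, fun t ht => (hmeas t ht).congr (hNN' t ht),
    fun t ht => (hint t ht).congr (hNN' t ht),
    fun s hs t ht hst => ?_, ?_⟩
  · filter_upwards [hpos t ht, hNN' t ht] with ω h h' using h' ▸ h
  · exact (condExp_congr_ae (hNN' t ht)).symm.trans ((hmart s hs t ht hst).trans (hNN' s hs))
  · filter_upwards [hprod, (Finset.eventually_all _).mpr hNN'] with ω h h'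
    have : ∏ t ∈ Icc 1 T, N t ω ^ (1 / α t) = ∏ t ∈ Icc 1 T, N' t ω ^ (1 / α t) :=
      prod_congr rfl fun t ht => by rw [h' t ht]
    rwa [this] at h

lemma solutionProcess_aestronglyMeasurable (hℱmono : Monotone ℱ)
    (hL : ∀ t ∈ Icc 1 T, AEStronglyMeasurable[ℱ t] (L t) μ) :
    ∀ t ∈ Icc 1 T, AEStronglyMeasurable[ℱ t] (solutionProcess α β L t) μ :=
  fun t ht => (hL t ht).mul <| Finset.aestronglyMeasurable_fun_prod' _ fun k hk =>
    (measurable_id.pow_const _).comp_aestronglyMeasurable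
      ((hL k (by grind)).mono (hℱmono (mem_Ico.mp hk).2.le))

lemma solutionProcess_bddAwayFromZero (hL : ∀ t ∈ Icc 1 T, AEBddAwayFromZero μ (L t)) :
    ∀ t ∈ Icc 1 T, AEBddAwayFromZero μ (solutionProcess α β L t) :=
  fun t ht => (hL t ht).mul <| AEBddAwayFromZero.prod _ fun k hk => (hL k (by grind)).rpow _

variable [IsFiniteMeasure μ]

lemma condExp_solutionProcess_succ (hℱmono : Monotone ℱ) (hℱle : ∀ t, ℱ t ≤ mΩ)
    (hβ0 : ∀ t ∈ Icc 1 T, β t ≠ 0) (hchain : ∀ s ∈ Ico 1 T, 1 / β s = 1 / α s + 1 / β (s + 1))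
    (hL : ∀ t ∈ Icc 1 T, AEStronglyMeasurable[ℱ t] (L t) μ ∧ AEBddAwayFromZero μ (L t))
    (hLcond : ∀ s ∈ Ico 1 T, μ[L (s + 1) | ℱ s] =ᵐ[μ] fun ω => L s ω ^ (β (s + 1) / β s)) :
    ∀ s ∈ Ico 1 T, μ[solutionProcess α β L (s + 1) | ℱ s] =ᵐ[μ] solutionProcess α β L s := by
  intro s hs
  obtain ⟨hs1, hsT⟩ := mem_Ico.mp hs
  have hs' : s + 1 ∈ Icc 1 T := by grind
  have hint : Integrable (solutionProcess α β L (s + 1)) μ :=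
    (solutionProcess_bddAwayFromZero (fun t ht => (hL t ht).2) _ hs').integrable
      ((solutionProcess_aestronglyMeasurable hℱmono (fun t ht => (hL t ht).1) _ hs').mono
        (hℱle _))
  set G : Ω → ℝ := fun ω => ∏ k ∈ Ico 1 (s + 1), L k ω ^ (-(β (k + 1) / α k))
  have hG : AEStronglyMeasurable[ℱ s] G μ := Finset.aestronglyMeasurable_fun_prod' _ fun k hk =>
    (measurable_id.pow_const _).comp_aestronglyMeasurable
      ((hL k (by grind)).1.mono (hℱmono (Nat.le_of_lt_succ (mem_Ico.mp hk).2)))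
  refine (condExp_ae_eq_mul_of_ae_eq_mul hG hint
    ((hL _ hs').2.integrable ((hL _ hs').1.mono (hℱle _)))
    (ae_of_all _ fun ω => mul_comm _ _) (hLcond s hs)).trans ?_
  filter_upwards [(hL s (by grind)).2.ae_pos] with ω hpos
  simp only [Pi.mul_apply, G, solutionProcess]
  rw [prod_Ico_succ_top hs1, mul_assoc, ← rpow_add hpos,
    neg_div_add_div_eq_one (hβ0 (s + 1) hs') (hchain s hs), rpow_one, mul_comm]

lemma solutionProcess_isMartingaleSolution (hℱmono : Monotone ℱ) (hℱle : ∀ t, ℱ t ≤ mΩ)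
    (hT : 1 ≤ T) (hβ0 : ∀ t ∈ Icc 1 T, β t ≠ 0) (hβT : β T = α T)
    (hchain : ∀ s ∈ Ico 1 T, 1 / β s = 1 / α s + 1 / β (s + 1))
    (hL : ∀ t ∈ Icc 1 T, AEStronglyMeasurable[ℱ t] (L t) μ ∧ AEBddAwayFromZero μ (L t))
    (hLT : L T =ᵐ[μ] fun ω => exp (-(α T) * W ω))
    (hLcond : ∀ s ∈ Ico 1 T, μ[L (s + 1) | ℱ s] =ᵐ[μ] fun ω => L s ω ^ (β (s + 1) / β s)) :
    IsMartingaleSolution μ ℱ T α W (solutionProcess α β L) := by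
  have hmeas := solutionProcess_aestronglyMeasurable (α := α) (β := β) hℱmono
    fun t ht => (hL t ht).1
  have hbdd := solutionProcess_bddAwayFromZero (α := α) (β := β) fun t ht => (hL t ht).2
  have hint : ∀ t ∈ Icc 1 T, Integrable (solutionProcess α β L t) μ :=
    fun t ht => (hbdd t ht).integrable ((hmeas t ht).mono (hℱle t))
  refine ⟨fun t ht => (hbdd t ht).ae_pos, hmeas, hint,
    condExp_ae_eq_of_condExp_succ_ae_eq hℱmono hℱle hmeas hint
      (condExp_solutionProcess_succ hℱmono hℱle hβ0 hchain hL hLcond), ?_⟩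
  filter_upwards [(Finset.eventually_all _).mpr fun t ht => (hL t ht).2.ae_pos, hLT]
    with ω hpos hLTω
  have hT' : T ∈ Icc 1 T := mem_Icc.mpr ⟨hT, le_rfl⟩
  rw [prod_rpow_eq_exp_weightedLogSum hT hβT fun t ht =>
      solutionProcess_pos (hpos t ht) fun k hk => hpos k (by grind),
    weightedLogSum_solutionProcess hβ0 hchain hpos T hT', hLTω, log_exp, hβT]
  field_simp [hβT ▸ hβ0 T hT']

end MartingaleProblem

section Uniqueness

variable {Ω : Type*} [mΩ : MeasurableSpace Ω] {μ : Measure Ω}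
  {ℱ : ℕ → MeasurableSpace Ω} {T : ℕ} {α β : ℕ → ℝ} {W : Ω → ℝ} {L N : ℕ → Ω → ℝ}

lemma IsMartingaleSolution.weightedLogSum_ae_eq_of_succ (hN : IsMartingaleSolution μ ℱ T α W N)
    (hℱmono : Monotone ℱ) (hβ0 : ∀ t ∈ Icc 1 T, β t ≠ 0)
    (hchain : ∀ s ∈ Ico 1 T, 1 / β s = 1 / α s + 1 / β (s + 1))
    (hLpos : ∀ t ∈ Icc 1 T, ∀ᵐ ω ∂μ, 0 < L t ω) (hLint : ∀ t ∈ Icc 1 T, Integrable (L t) μ)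
    (hLcond : ∀ s ∈ Ico 1 T, μ[L (s + 1) | ℱ s] =ᵐ[μ] fun ω => L s ω ^ (β (s + 1) / β s))
    {s : ℕ} (hs : s ∈ Ico 1 T)
    (hsucc : ∀ᵐ ω ∂μ, weightedLogSum α β N (s + 1) ω = log (L (s + 1) ω) / β (s + 1)) :
    ∀ᵐ ω ∂μ, weightedLogSum α β N s ω = log (L s ω) / β s := by
  obtain ⟨hNpos, hNmeas, hNint, hNmart, -⟩ := hN
  obtain ⟨hs1, hsT⟩ := mem_Ico.mp hs
  have hs' : s ∈ Icc 1 T := by grind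
  have hs1' : s + 1 ∈ Icc 1 T := by grind
  have hb : β (s + 1) ≠ 0 := hβ0 (s + 1) hs1'
  set S : Ω → ℝ := fun ω => ∑ t ∈ Ico 1 (s + 1), log (N t ω) / α t
  set G : Ω → ℝ := fun ω => exp (-β (s + 1) * S ω)
  have hG : AEStronglyMeasurable[ℱ s] G μ :=
    (measurable_exp.comp (measurable_const_mul _)).comp_aestronglyMeasurable
      (Finset.aestronglyMeasurable_fun_sum' _ fun t ht =>
        (measurable_log.div_const _).comp_aestronglyMeasurable
          ((hNmeas t (by grind)).mono (hℱmono (Nat.le_of_lt_succ (mem_Ico.mp ht).2))))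
  have hNG : N (s + 1) =ᵐ[μ] G * L (s + 1) := by
    filter_upwards [hsucc, hNpos _ hs1', hLpos _ hs1'] with ω hω hN hL
    have hlog : log (N (s + 1) ω) = -β (s + 1) * S ω + log (L (s + 1) ω) := by
      rw [weightedLogSum] at hω
      field_simp at hω
      linarith
    rw [Pi.mul_apply, ← exp_log hN, hlog, exp_add, exp_log hL]
  have hNs : N s =ᵐ[μ] G * fun ω => L s ω ^ (β (s + 1) / β s) :=
    (hNmart s hs' (s + 1) hs1' (Nat.le_succ s)).symm.trans
      (condExp_ae_eq_mul_of_ae_eq_mul hG (hNint _ hs1') (hLint _ hs1') hNG (hLcond s hs))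
  filter_upwards [hNs, hNpos s hs', hLpos s hs'] with ω hω hN hL
  have hlog : log (N s ω) = -β (s + 1) * S ω + β (s + 1) / β s * log (L s ω) := by
    rw [hω, Pi.mul_apply, log_mul (exp_pos _).ne' (rpow_pos_of_pos hL _).ne', log_exp,
      log_rpow hL]
  rw [show S ω = _ from sum_Ico_succ_top hs1 _] at hlog
  exact div_add_eq_of_eq_neg_mul_add hb (hchain s hs) hlog

lemma IsMartingaleSolution.weightedLogSum_ae_eq (hN : IsMartingaleSolution μ ℱ T α W N)
    (hℱmono : Monotone ℱ) (hT : 1 ≤ T) (hβ0 : ∀ t ∈ Icc 1 T, β t ≠ 0) (hβT : β T = α T)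
    (hchain : ∀ s ∈ Ico 1 T, 1 / β s = 1 / α s + 1 / β (s + 1))
    (hLpos : ∀ t ∈ Icc 1 T, ∀ᵐ ω ∂μ, 0 < L t ω) (hLint : ∀ t ∈ Icc 1 T, Integrable (L t) μ)
    (hLT : L T =ᵐ[μ] fun ω => exp (-(α T) * W ω))
    (hLcond : ∀ s ∈ Ico 1 T, μ[L (s + 1) | ℱ s] =ᵐ[μ] fun ω => L s ω ^ (β (s + 1) / β s)) :
    ∀ s ∈ Icc 1 T, ∀ᵐ ω ∂μ, weightedLogSum α β N s ω = log (L s ω) / β s := by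
  intro s hs
  obtain ⟨hs1, hsT⟩ := mem_Icc.mp hs
  clear hs
  induction hsT using Nat.decreasingInduction with
  | self =>
    filter_upwards [hN.2.2.2.2, (Finset.eventually_all _).mpr hN.1, hLT] with ω hprod hpos hLTω
    rw [prod_rpow_eq_exp_weightedLogSum hT hβT hpos, exp_eq_exp] at hprod
    rw [hprod, hLTω, log_exp, hβT]
    field_simp [hβT ▸ hβ0 T (mem_Icc.mpr ⟨hT, le_rfl⟩)]
  | of_succ s hsT ih =>
    exact hN.weightedLogSum_ae_eq_of_succ hℱmono hβ0 hchain hLpos hLint hLcond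
      (mem_Ico.mpr ⟨hs1, hsT⟩) (ih (by omega))

lemma ae_eq_of_weightedLogSum_ae_eq {M : ℕ → Ω → ℝ} (hβ0 : ∀ t ∈ Icc 1 T, β t ≠ 0)
    (hNpos : ∀ t ∈ Icc 1 T, ∀ᵐ ω ∂μ, 0 < N t ω) (hMpos : ∀ t ∈ Icc 1 T, ∀ᵐ ω ∂μ, 0 < M t ω)
    (hN : ∀ s ∈ Icc 1 T, ∀ᵐ ω ∂μ, weightedLogSum α β N s ω = log (L s ω) / β s)
    (hM : ∀ s ∈ Icc 1 T, ∀ᵐ ω ∂μ, weightedLogSum α β M s ω = log (L s ω) / β s) :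
    ∀ t ∈ Icc 1 T, N t =ᵐ[μ] M t := by
  have hall : ∀ᵐ ω ∂μ, ∀ t ∈ Icc 1 T, N t ω = M t ω := by
    filter_upwards [(Finset.eventually_all _).mpr hNpos, (Finset.eventually_all _).mpr hMpos,
      (Finset.eventually_all _).mpr hN, (Finset.eventually_all _).mpr hM]
      with ω hNpos hMpos hN hM
    have hlog := eq_of_div_add_sum_div_eq (x := fun t => log (N t ω)) (y := fun t => log (M t ω))
      hβ0 fun s hs => (hN s hs).trans (hM s hs).symm
    exact fun t ht => log_injOn_pos (hNpos t ht) (hMpos t ht) (hlog t ht)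
  exact fun t ht => hall.mono fun ω h => h t ht

end Uniqueness

/-- Solution of the martingale problem M (Theorem 3.1): the process `(M_t(α,W))` built
from the backward recursion `(L1)` and formula `(M)` is the unique positive
`(F_t)`-martingale with `∏_{t∈𝕋} M_t^{1/α_t} = exp(-W)` a.s. -/
theorem martingale_problem_solution
    {Ω : Type*} [mΩ : MeasurableSpace Ω] (μ : Measure Ω) [IsProbabilityMeasure μ]
    (T : ℕ) (hT : 1 ≤ T)
    (ℱ : ℕ → MeasurableSpace Ω) (hℱmono : Monotone ℱ) (hℱle : ∀ t, ℱ t ≤ mΩ)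
    (α β : ℕ → ℝ) (hα : ∀ t ∈ Finset.Icc 1 T, 0 < α t)
    (hβ : ∀ t ∈ Finset.Icc 1 T, 1 / β t = ∑ k ∈ Finset.Icc t T, 1 / α k)
    (W : Ω → ℝ) (hWmeas : Measurable[ℱ T] W) (hWbdd : ∃ C : ℝ, ∀ᵐ ω ∂μ, |W ω| ≤ C)
    (L M : ℕ → Ω → ℝ)
    (hLT : L T =ᵐ[μ] fun ω => Real.exp (-(α T) * W ω))
    (hLstep : ∀ t ∈ Finset.Icc 2 T,
      L (t - 1) =ᵐ[μ] fun ω => ((μ[L t | ℱ (t - 1)]) ω) ^ (β (t - 1) / β t))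
    (hM1 : M 1 =ᵐ[μ] L 1)
    (hMt : ∀ t ∈ Finset.Icc 2 T,
      M t =ᵐ[μ] fun ω =>
        L t ω * ∏ k ∈ Finset.Icc 1 (t - 1), (L k ω) ^ (-(β (k + 1) / α k))) :
    ((∀ t ∈ Finset.Icc 1 T, ∀ᵐ ω ∂μ, 0 < M t ω) ∧
     (∀ t ∈ Finset.Icc 1 T, AEStronglyMeasurable[ℱ t] (M t) μ) ∧
     (∀ t ∈ Finset.Icc 1 T, Integrable (M t) μ) ∧
     (∀ s ∈ Finset.Icc 1 T, ∀ t ∈ Finset.Icc 1 T, s ≤ t → μ[M t | ℱ s] =ᵐ[μ] M s) ∧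
     (∀ᵐ ω ∂μ, ∏ t ∈ Finset.Icc 1 T, (M t ω) ^ (1 / α t) = Real.exp (-W ω))) ∧
    (∀ N : ℕ → Ω → ℝ,
      (∀ t ∈ Finset.Icc 1 T, ∀ᵐ ω ∂μ, 0 < N t ω) →
      (∀ t ∈ Finset.Icc 1 T, AEStronglyMeasurable[ℱ t] (N t) μ) →
      (∀ t ∈ Finset.Icc 1 T, Integrable (N t) μ) →
      (∀ s ∈ Finset.Icc 1 T, ∀ t ∈ Finset.Icc 1 T, s ≤ t → μ[N t | ℱ s] =ᵐ[μ] N s) →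
      (∀ᵐ ω ∂μ, ∏ t ∈ Finset.Icc 1 T, (N t ω) ^ (1 / α t) = Real.exp (-W ω)) →
      ∀ t ∈ Finset.Icc 1 T, N t =ᵐ[μ] M t) := by
  have hβ0 : ∀ t ∈ Icc 1 T, β t ≠ 0 := fun t ht => (beta_pos hα hβ t ht).ne'
  have hβT := beta_last hT hβ
  have hchain := one_div_beta_eq_add hβ
  have hLstep' : ∀ s ∈ Ico 1 T, L s =ᵐ[μ] fun ω => (μ[L (s + 1) | ℱ s]) ω ^ (β s / β (s + 1)) :=
    fun s hs => by simpa using hLstep (s + 1) (by grind)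
  have hL := aestronglyMeasurable_and_bddAwayFromZero_of_backward hℱle hWmeas hWbdd hLT hLstep'
  have hLcond := condExp_succ_ae_eq_rpow hℱle hβ0 hL hLstep'
  have hMsol : IsMartingaleSolution μ ℱ T α W M := by
    refine (solutionProcess_isMartingaleSolution hℱmono hℱle hT hβ0 hβT hchain hL hLT
      hLcond).congr fun t ht => ?_
    rcases (mem_Icc.mp ht).1.eq_or_lt with rfl | ht2
    · filter_upwards [hM1] with ω h
      simp [solutionProcess, h]
    · filter_upwards [hMt t (by grind)] with ω h
      rw [h, solutionProcess, Icc_sub_one_right_eq_Ico_of_not_isMin (by simp; omega)]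
  refine ⟨hMsol, fun N hNpos hNmeas hNint hNmart hNprod => ?_⟩
  have hN : IsMartingaleSolution μ ℱ T α W N := ⟨hNpos, hNmeas, hNint, hNmart, hNprod⟩
  have hLpos : ∀ t ∈ Icc 1 T, ∀ᵐ ω ∂μ, 0 < L t ω := fun t ht => (hL t ht).2.ae_pos
  have hLint : ∀ t ∈ Icc 1 T, Integrable (L t) μ :=
    fun t ht => (hL t ht).2.integrable ((hL t ht).1.mono (hℱle t))
  exact ae_eq_of_weightedLogSum_ae_eq hβ0 hNpos hMsol.1
    (hN.weightedLogSum_ae_eq hℱmono hT hβ0 hβT hchain hLpos hLint hLT hLcond)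
    (hMsol.weightedLogSum_ae_eq hℱmono hT hβ0 hβT hchain hLpos hLint hLT hLcond)
end
end
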